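/- arXiv:2502.11026 — 3 statements merged into one kernel-verified Lean document; each statement's English description precedes it below -/
import Mathlib

section
/- Let Y be a finite type with at least two elements and let w : Y → ℝ be such that w y₀ < 0 for some y₀ ∈ Y. Then the weighted SFT loss is unbounded below over positive probability vectors: for every M ∈ ℝ there exists a positive probability vector π on Y (π y > 0 for all y and ∑_y π y = 1) with -∑_y w y * log(π y) < M. -/
/-!
Put mass `t` on the coordinate `y₀` with negative weight and spread `1 - t` uniformly over the
others. As `t → 0⁺` the term `-w y₀ * log t` tends to `-∞`, while the remaining terms converge
to the finite value `-(∑_{y ≠ y₀} w y) * log (1 / (|Y| - 1))`.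
-/

open Filter Finset Topology

namespace WeightedSFT

variable {Y : Type*} [Fintype Y]

noncomputable def loss (w π : Y → ℝ) : ℝ :=
  -∑ y, w y * Real.log (π y)

theorem card_sub_one_pos (hcard : 1 < Fintype.card Y) : (0 : ℝ) < Fintype.card Y - 1 := by
  have : (1 : ℝ) < Fintype.card Y := by exact_mod_cast hcard
  linarith

variable [DecidableEq Y]

noncomputable def spikeVector (y₀ : Y) (t : ℝ) : Y → ℝ :=
  fun y => if y = y₀ then t else (1 - t) / (Fintype.card Y - 1)

theorem spikeVector_pos (hcard : 1 < Fintype.card Y) (y₀ : Y) {t : ℝ} (ht₀ : 0 < t)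
    (ht₁ : t < 1) (y : Y) : 0 < spikeVector y₀ t y := by
  unfold spikeVector
  split_ifs
  · exact ht₀
  · exact div_pos (by linarith) (card_sub_one_pos hcard)

theorem sum_spikeVector (hcard : 1 < Fintype.card Y) (y₀ : Y) (t : ℝ) :
    ∑ y, spikeVector y₀ t y = 1 := by
  have hc := (card_sub_one_pos hcard).ne'
  unfold spikeVector
  rw [← add_sum_erase _ _ (mem_univ y₀),
    sum_congr rfl fun y hy => if_neg (ne_of_mem_erase hy), sum_const,
    card_erase_of_mem (mem_univ y₀), card_univ, nsmul_eq_mul,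
    Nat.cast_sub hcard.le, Nat.cast_one, if_pos rfl]
  field_simp
  ring

theorem loss_spikeVector (w : Y → ℝ) (y₀ : Y) (t : ℝ) :
    loss w (spikeVector y₀ t) =
      -w y₀ * Real.log t -
        (∑ y ∈ univ.erase y₀, w y) * Real.log ((1 - t) / (Fintype.card Y - 1)) := by
  rw [loss, ← add_sum_erase _ _ (mem_univ y₀),
    sum_congr rfl fun y hy => by rw [spikeVector, if_neg (ne_of_mem_erase hy)], ← sum_mul,
    spikeVector, if_pos rfl]
  ring

theorem tendsto_loss_spikeVector_atBot (hcard : 1 < Fintype.card Y) (w : Y → ℝ) {y₀ : Y}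
    (hw : w y₀ < 0) : Tendsto (fun t => loss w (spikeVector y₀ t)) (𝓝[>] 0) atBot := by
  simp only [loss_spikeVector, sub_eq_add_neg]
  have hc := (card_sub_one_pos hcard).ne'
  have hspread : Tendsto (fun t : ℝ => Real.log ((1 - t) / (Fintype.card Y - 1))) (𝓝[>] 0)
      (𝓝 (Real.log ((1 - 0) / (Fintype.card Y - 1)))) :=
    (((tendsto_const_nhds.sub tendsto_id).div_const _).log (by simpa using hc)).mono_left
      nhdsWithin_le_nhds
  exact (Real.tendsto_log_nhdsGT_zero.const_mul_atBot (neg_pos.2 hw)).atBot_add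
    (hspread.const_mul _).neg

end WeightedSFT

open WeightedSFT in
theorem weighted_sft_loss_unbounded_below_of_neg_weight {Y : Type*} [Fintype Y]
    (hcard : 1 < Fintype.card Y) (w : Y → ℝ) (y₀ : Y) (hw : w y₀ < 0) :
    ∀ M : ℝ, ∃ π : Y → ℝ, (∀ y, 0 < π y) ∧ (∑ y, π y = 1) ∧
      -∑ y, w y * Real.log (π y) < M := by
  classical
  intro M
  obtain ⟨t, hlt, ht₀, ht₁⟩ :=
    (((tendsto_loss_spikeVector_atBot hcard w hw).eventually (eventually_lt_atBot M)).and
      (Ioo_mem_nhdsGT one_pos)).exists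
  exact ⟨spikeVector y₀ t, spikeVector_pos hcard y₀ ht₀ ht₁, sum_spikeVector hcard y₀ t, hlt⟩
end

section
/- Let Y be a finite type, let y₀ ≠ y₁ be two elements of Y, and let w : Y → ℝ satisfy w y₀ < 0. For ε ∈ (0,1) define the probability vector π_ε on Y by π_ε y₀ = ε, π_ε y₁ = 1 - ε, and π_ε y = 0 for all other y. Then the weighted SFT loss L(ε) = -∑_y w y * log(π_ε y) tends to -∞ as ε → 0⁺ (i.e., the map ε ↦ L(ε) tends to atBot along nhdsWithin 0 (Ioi 0)). -/
theorem weighted_sft_loss_tendsto_atBot {Y : Type*} [Fintype Y] [DecidableEq Y]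
    (y₀ y₁ : Y) (hne : y₀ ≠ y₁) (w : Y → ℝ) (hw : w y₀ < 0)
    (πe : ℝ → Y → ℝ)
    (hπe : ∀ ε : ℝ, ∀ y : Y, πe ε y = if y = y₀ then ε else if y = y₁ then 1 - ε else 0) :
    Filter.Tendsto (fun ε : ℝ => -∑ y, w y * Real.log (πe ε y))
      (nhdsWithin 0 (Set.Ioi 0)) Filter.atBot := by
  have hsum : ∀ ε : ℝ, (-∑ y, w y * Real.log (πe ε y)) =
      (-w y₀) * Real.log ε + (-(w y₁ * Real.log (1 - ε))) := by
    intro ε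
    have : (∑ y, w y * Real.log (πe ε y)) =
        ∑ y ∈ ({y₀, y₁} : Finset Y), w y * Real.log (πe ε y) := by
      refine (Finset.sum_subset (Finset.subset_univ _) ?_).symm
      intro y _ hy
      simp only [Finset.mem_insert, Finset.mem_singleton, not_or] at hy
      rw [hπe, if_neg hy.1, if_neg hy.2, Real.log_zero, mul_zero]
    rw [this, Finset.sum_pair hne, hπe, hπe, if_pos rfl, if_neg hne.symm, if_pos rfl]
    ring
  simp only [hsum]
  have h1 : Filter.Tendsto (fun ε : ℝ => (-w y₀) * Real.log ε)
      (nhdsWithin 0 (Set.Ioi 0)) Filter.atBot :=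
    (Real.tendsto_log_nhdsGT_zero).const_mul_atBot (by linarith)
  have h2 : Filter.Tendsto (fun ε : ℝ => -(w y₁ * Real.log (1 - ε)))
      (nhdsWithin 0 (Set.Ioi 0)) (nhds (-(w y₁ * Real.log (1 - 0)))) := by
    refine Filter.Tendsto.neg (Filter.Tendsto.const_mul _ ?_)
    have hc : Filter.Tendsto (fun ε : ℝ => 1 - ε) (nhds 0) (nhds (1 - 0)) :=
      (continuous_const.sub continuous_id).tendsto 0
    exact (((Real.continuousAt_log (by norm_num)).tendsto.comp (by simpa using hc))).mono_left
      nhdsWithin_le_nhds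
  exact h1.atBot_add h2
end

section
/- Let Y be a nonempty finite type, let π_ref : Y → ℝ be a positive probability vector on Y, let r : Y → ℝ, and let β > 0. Set Z = ∑_y π_ref y * exp(r y / β) and define π* y = π_ref y * exp(r y / β) / Z. Then π* is a positive probability vector, and for every positive probability vector π on Y, ∑_y π y * r y - β * ∑_y π y * log(π y / π_ref y) ≤ ∑_y π* y * r y - β * ∑_y π* y * log(π* y / π_ref y), with equality if and only if π = π*. That is, π* is the unique maximizer of the KL-regularized RLHF objective J(π) = E_π[r] - β·KL(π ‖ π_ref) over positive probability vectors. -/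
lemma gibbs_aux {Y : Type*} [Fintype Y] (p q : Y → ℝ)
    (hp : ∀ y, 0 < p y) (hq : ∀ y, 0 < q y)
    (hp1 : ∑ y, p y = 1) (hq1 : ∑ y, q y = 1) :
    0 ≤ ∑ y, p y * Real.log (p y / q y) ∧
      ((∑ y, p y * Real.log (p y / q y) = 0) ↔ p = q) := by
  have hterm : ∀ y, p y * Real.log (q y / p y) ≤ q y - p y := by
    intro y
    have h1 : Real.log (q y / p y) ≤ q y / p y - 1 :=
      Real.log_le_sub_one_of_pos (div_pos (hq y) (hp y))
    calc p y * Real.log (q y / p y) ≤ p y * (q y / p y - 1) :=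
          mul_le_mul_of_nonneg_left h1 (hp y).le
      _ = q y - p y := by
          rw [mul_comm, sub_mul, div_mul_cancel₀ _ (hp y).ne', one_mul]
  have hflip : ∀ y, p y * Real.log (p y / q y) = -(p y * Real.log (q y / p y)) := by
    intro y
    rw [Real.log_div (hp y).ne' (hq y).ne', Real.log_div (hq y).ne' (hp y).ne']
    ring
  have hsum0 : ∑ y, (q y - p y) = 0 := by rw [Finset.sum_sub_distrib, hp1, hq1]; ring
  have hle : ∑ y, p y * Real.log (q y / p y) ≤ 0 := by
    calc ∑ y, p y * Real.log (q y / p y) ≤ ∑ y, (q y - p y) :=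
          Finset.sum_le_sum fun y _ => hterm y
      _ = 0 := hsum0
  have hnonneg : 0 ≤ ∑ y, p y * Real.log (p y / q y) := by
    rw [Finset.sum_congr rfl fun y _ => hflip y, Finset.sum_neg_distrib]
    linarith
  refine ⟨hnonneg, ⟨fun h => ?_, fun h => ?_⟩, ⟩
  · by_contra hne
    obtain ⟨y0, hy0⟩ := Function.ne_iff.mp hne
    have hstrict : ∑ y, p y * Real.log (q y / p y) < ∑ y, (q y - p y) := by
      refine Finset.sum_lt_sum (fun y _ => hterm y) ⟨y0, Finset.mem_univ y0, ?_⟩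
      have h1 : Real.log (q y0 / p y0) < q y0 / p y0 - 1 :=
        Real.log_lt_sub_one_of_pos (div_pos (hq y0) (hp y0))
          (fun hc => hy0 ((div_eq_one_iff_eq (hp y0).ne').mp hc).symm)
      calc p y0 * Real.log (q y0 / p y0) < p y0 * (q y0 / p y0 - 1) :=
            (mul_lt_mul_iff_right₀ (hp y0)).mpr h1
        _ = q y0 - p y0 := by
          rw [mul_comm, sub_mul, div_mul_cancel₀ _ (hp y0).ne', one_mul]
    rw [hsum0] at hstrict
    have : ∑ y, p y * Real.log (p y / q y) > 0 := by
      rw [Finset.sum_congr rfl fun y _ => hflip y, Finset.sum_neg_distrib]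
      linarith
    linarith
  · subst h
    apply Finset.sum_eq_zero
    intro y _
    rw [div_self (hp y).ne', Real.log_one, mul_zero]

theorem rlhf_objective_maximized_by_closed_form {Y : Type*} [Fintype Y] [Nonempty Y]
    (πref : Y → ℝ) (hrefpos : ∀ y, 0 < πref y) (href1 : ∑ y, πref y = 1)
    (r : Y → ℝ) (β : ℝ) (hβ : 0 < β)
    (Z : ℝ) (hZ : Z = ∑ y, πref y * Real.exp (r y / β))
    (πstar : Y → ℝ) (hπstar : ∀ y, πstar y = πref y * Real.exp (r y / β) / Z) :
    ((∀ y, 0 < πstar y) ∧ ∑ y, πstar y = 1) ∧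
      ∀ π : Y → ℝ, (∀ y, 0 < π y) → ∑ y, π y = 1 →
        (∑ y, π y * r y - β * ∑ y, π y * Real.log (π y / πref y) ≤
          ∑ y, πstar y * r y - β * ∑ y, πstar y * Real.log (πstar y / πref y)) ∧
          ((∑ y, π y * r y - β * ∑ y, π y * Real.log (π y / πref y) =
            ∑ y, πstar y * r y - β * ∑ y, πstar y * Real.log (πstar y / πref y)) ↔
            π = πstar) := by
  have hZpos : 0 < Z := by
    rw [hZ]
    exact Finset.sum_pos (fun y _ => mul_pos (hrefpos y) (Real.exp_pos _))
      Finset.univ_nonempty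
  have hstarpos : ∀ y, 0 < πstar y := fun y => by
    rw [hπstar y]; exact div_pos (mul_pos (hrefpos y) (Real.exp_pos _)) hZpos
  have hstar1 : ∑ y, πstar y = 1 := by
    rw [Finset.sum_congr rfl fun y _ => hπstar y, ← Finset.sum_div, ← hZ,
      div_self hZpos.ne']
  -- key identity: J π = β * log Z - β * KL(π ‖ πstar)
  have hlogstar : ∀ y, Real.log (πstar y / πref y) = r y / β - Real.log Z := by
    intro y
    rw [hπstar y]
    rw [div_div, Real.log_div (mul_pos (hrefpos y) (Real.exp_pos _)).ne'
        (mul_pos hZpos (hrefpos y)).ne',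
      Real.log_mul (hrefpos y).ne' (Real.exp_ne_zero _),
      Real.log_mul hZpos.ne' (hrefpos y).ne', Real.log_exp]
    ring
  have hkey : ∀ π : Y → ℝ, (∀ y, 0 < π y) → ∑ y, π y = 1 →
      ∑ y, π y * r y - β * ∑ y, π y * Real.log (π y / πref y) =
        β * Real.log Z - β * ∑ y, π y * Real.log (π y / πstar y) := by
    intro π hπ hπ1
    have hptwise : ∀ y, π y * Real.log (π y / πstar y) =
        π y * Real.log (π y / πref y) - π y * r y / β + π y * Real.log Z := by
      intro y
      rw [Real.log_div (hπ y).ne' (hstarpos y).ne',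
        Real.log_div (hπ y).ne' (hrefpos y).ne']
      have := hlogstar y
      rw [Real.log_div (hstarpos y).ne' (hrefpos y).ne'] at this
      have h2 : Real.log (πstar y) = Real.log (πref y) + r y / β - Real.log Z := by
        linarith
      rw [h2]; ring
    rw [Finset.sum_congr rfl fun y _ => hptwise y]
    rw [Finset.sum_add_distrib, Finset.sum_sub_distrib, ← Finset.sum_mul, hπ1,
      ← Finset.sum_div]
    field_simp
    ring
  refine ⟨⟨hstarpos, hstar1⟩, fun π hπ hπ1 => ?_⟩
  obtain ⟨hkl_nonneg, hkl_iff⟩ := gibbs_aux π πstar hπ hstarpos hπ1 hstar1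
  have h1 := hkey π hπ hπ1
  have h2 := hkey πstar hstarpos hstar1
  have h3 : ∑ y, πstar y * Real.log (πstar y / πstar y) = 0 := by
    apply Finset.sum_eq_zero
    intro y _
    rw [div_self (hstarpos y).ne', Real.log_one, mul_zero]
  rw [h3] at h2
  constructor
  · rw [h1, h2]; nlinarith
  · rw [h1, h2]
    constructor
    · intro h
      apply hkl_iff.mp
      nlinarith
    · intro h
      rw [hkl_iff.mpr h]
end
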